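/- Let m ≥ 0 and let a_1, ..., a_n be invertible elements of a commutative ring. Then E_{2m}(a_1, -a_1, a_1^{-1}, -a_1^{-1}, ..., a_n, -a_n, a_n^{-1}, -a_n^{-1}) = (-1)^m · E_m(a_1^2, a_1^{-2}, ..., a_n^2, a_n^{-2}), where the left side is the 2m-th elementary symmetric polynomial in the 4n listed variables and the right side is the m-th elementary symmetric polynomial in the 2n listed variables. -/

import Mathlib

/-!
The generating polynomial `∏ (1 + r X)` of the multiset `s + (-s)` is
`∏_{r ∈ s} (1 + r X)(1 - r X) = ∏_{r ∈ s} (1 - r² X²)`, the image under `X ↦ X²` of the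
generating polynomial of `{-r² | r ∈ s}`. Comparing coefficients of `X^{2m}` gives
`E_{2m}(s, -s) = E_m(-s²) = (-1)^m E_m(s²)`; the theorem is the case where `s` lists every `a_j`
together with its inverse.
-/

/-- `E l d`: the `d`-th elementary symmetric polynomial of the list `l`,
with the convention `E l d = 0` for `d < 0` (and automatically `E l d = 0`
when `d` exceeds the length of `l`, and `E l 0 = 1`). -/
noncomputable def E {R : Type*} [CommRing R] (l : List R) (d : ℤ) : R :=
  if d < 0 then 0 else Multiset.esymm (l : Multiset R) d.toNat

open Polynomial

theorem E_natCast {R : Type*} [CommRing R] (l : List R) (k : ℕ) :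
    E l k = (l : Multiset R).esymm k := by
  simp only [E, Int.toNat_natCast, if_neg (Int.natCast_nonneg k).not_gt]

namespace Multiset

variable {R : Type*} [CommRing R]

theorem esymm_cons_succ (a : R) (s : Multiset R) (k : ℕ) :
    (a ::ₘ s).esymm (k + 1) = s.esymm (k + 1) + a * s.esymm k := by
  simp only [esymm, powersetCard_cons, map_add, sum_add, map_map, Function.comp_def, prod_cons,
    sum_map_mul_left]

theorem coeff_prod_one_add_C_mul_X (s : Multiset R) (k : ℕ) :
    (s.map fun r => 1 + C r * X).prod.coeff k = s.esymm k := by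
  induction s using Multiset.induction_on generalizing k with
  | empty => cases k <;> simp [esymm, coeff_one, powersetCard_zero_right]
  | cons a s ih =>
    cases k with
    | zero => simp [coeff_zero_eq_eval_zero, eval_multiset_prod, esymm]
    | succ k =>
      rw [map_cons, prod_cons, add_mul, one_mul, coeff_add, mul_assoc, coeff_C_mul, coeff_X_mul,
        ih, ih, esymm_cons_succ]

theorem esymm_add_map_neg_two_mul (s : Multiset R) (k : ℕ) :
    (s + s.map Neg.neg).esymm (2 * k) = (-1) ^ k * (s.map (· ^ 2)).esymm k := by
  have hpair (r : R) : (1 + C r * X) * (1 + C (-r) * X) = expand R 2 (1 + C (-r ^ 2) * X) := by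
    simp only [_root_.map_add, _root_.map_one, _root_.map_mul, expand_C, expand_X, _root_.map_neg,
      _root_.map_pow]
    ring
  have hgen : ((s + s.map Neg.neg).map fun r => 1 + C r * X).prod =
      expand R 2 (((s.map (· ^ 2)).map Neg.neg).map fun r => 1 + C r * X).prod := by
    simp only [map_add, map_map, prod_add, Function.comp_def, map_multiset_prod, ← prod_map_mul,
      hpair]
  rw [← esymm_neg, ← coeff_prod_one_add_C_mul_X, ← coeff_prod_one_add_C_mul_X, hgen, mul_comm,
    coeff_expand_mul two_pos]

theorem coe_flatten_ofFn {α : Type*} {n : ℕ} (f : Fin n → List α) :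
    ((List.ofFn f).flatten : Multiset α) = ∑ j, (f j : Multiset α) := by
  rw [← coe_join, List.map_ofFn, ← Fin.univ_val_map, join, Finset.sum_eq_multiset_sum]
  rfl

theorem pair_add_map_neg_pair {α : Type*} [Neg α] (x y : α) :
    ({x, y} : Multiset α) + map Neg.neg {x, y} = ↑[x, -x, y, -y] :=
  congrArg (x ::ₘ ·) (cons_swap y (-x) {-y})

end Multiset

open Multiset in
theorem esymm_even_folding {R : Type*} [CommRing R] (n : ℕ) (a : Fin n → Rˣ) (m : ℕ) :
    E ((List.ofFn fun j => [((a j : R)), -(a j : R), ((a j)⁻¹ : Rˣ), -((a j)⁻¹ : Rˣ)]).flatten)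
        (2 * m)
      = (-1) ^ m *
        E ((List.ofFn fun j => [((a j : R)) ^ 2, ((a j)⁻¹ : Rˣ) ^ 2]).flatten) m := by
  set s : Multiset R := ∑ j, {(a j : R), (((a j)⁻¹ : Rˣ) : R)}
  have hfold : ((List.ofFn fun j => [((a j : R)), -(a j : R), ((a j)⁻¹ : Rˣ),
      -((a j)⁻¹ : Rˣ)]).flatten : Multiset R) = s + s.map Neg.neg := by
    rw [coe_flatten_ofFn, ← coe_mapAddMonoidHom, map_sum, ← Finset.sum_add_distrib]
    exact Finset.sum_congr rfl fun j _ => (pair_add_map_neg_pair _ _).symm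
  have hsq : ((List.ofFn fun j => [((a j : R)) ^ 2, ((a j)⁻¹ : Rˣ) ^ 2]).flatten : Multiset R) =
      s.map (· ^ 2) := by
    rw [coe_flatten_ofFn, ← coe_mapAddMonoidHom, map_sum]
    rfl
  rw [← Nat.cast_two, ← Nat.cast_mul, E_natCast, E_natCast, hfold, hsq]
  exact esymm_add_map_neg_two_mul s m
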